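/- Let μ_1, μ_2 ∈ ℂ, let n_{11}, n_{21} be nonnegative integers, and set z_1 = q^{2μ_1+1} z and z_2 = q^{2μ_2-1} z for an indeterminate z. Then the product of oscillator ℓ-weight series Ψ_{1,n_{11}}(z_1, u) · Ψ_{2,n_{21}}(z_2, u), where Ψ_{1,n}(w,u) = (1 - q w u)/((1 - q^{-2n-1} w u)(1 - q^{-2n+1} w u)) and Ψ_{2,n}(w,u) = 1 - q w u, equals (1 - q^{2μ_1+2} z u)(1 - q^{2μ_2} z u) / ((1 - q^{2μ_1+2-2n_{11}} z u)(1 - q^{2μ_1-2n_{11}} z u)). In particular, this product does not depend on n_{21} and coincides with the ℓ-weight series Λ^{μ+}_{m,1} of the evaluation Verma module for sl(2) with m_{12} = n_{11}. -/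
import Mathlib


/-- `q^c := exp(ℏ c)` for complex `c`, where `q = exp ℏ`. -/
noncomputable def ep (ℏ c : ℂ) : ℂ := Complex.exp (ℏ * c)

/-- For `z₁ = q^{2μ₁+1} z` and `z₂ = q^{2μ₂-1} z`, the product of the oscillator
ℓ-weight series `Ψ_{1,n₁₁}(z₁,u) · Ψ_{2,n₂₁}(z₂,u)`, where
`Ψ_{1,n}(w,u) = (1 - q w u)/((1 - q^{-2n-1} w u)(1 - q^{-2n+1} w u))` and
`Ψ_{2,n}(w,u) = 1 - q w u`, equals
`(1 - q^{2μ₁+2} z u)(1 - q^{2μ₂} z u)/((1 - q^{2μ₁+2-2n₁₁} z u)(1 - q^{2μ₁-2n₁₁} z u))`;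
in particular it does not depend on `n₂₁`. -/
theorem oscillator_product_sl2 (ℏ : ℂ) (q : ℂ) (hq : q = Complex.exp ℏ)
    (μ₁ μ₂ : ℂ) (z z₁ z₂ : ℂ) (n₁₁ n₂₁ : ℕ)
    (hz1 : z₁ = ep ℏ (2 * μ₁ + 1) * z)
    (hz2 : z₂ = ep ℏ (2 * μ₂ - 1) * z) :
    (1 - RatFunc.C (ep ℏ 1 * z₁) * RatFunc.X) /
        ((1 - RatFunc.C (ep ℏ (-(2 * (n₁₁ : ℂ)) - 1) * z₁) * RatFunc.X) *
          (1 - RatFunc.C (ep ℏ (-(2 * (n₁₁ : ℂ)) + 1) * z₁) * RatFunc.X)) *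
      (1 - RatFunc.C (ep ℏ 1 * z₂) * RatFunc.X)
      =
    (1 - RatFunc.C (ep ℏ (2 * μ₁ + 2) * z) * RatFunc.X) *
        (1 - RatFunc.C (ep ℏ (2 * μ₂) * z) * RatFunc.X) /
      ((1 - RatFunc.C (ep ℏ (2 * μ₁ + 2 - 2 * (n₁₁ : ℂ)) * z) * RatFunc.X) *
        (1 - RatFunc.C (ep ℏ (2 * μ₁ - 2 * (n₁₁ : ℂ)) * z) * RatFunc.X)) := by
  have key : ∀ a b : ℂ, ep ℏ a * (ep ℏ b * z) = ep ℏ (a + b) * z := by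
    intro a b
    simp [ep, mul_add, Complex.exp_add, mul_assoc]
  rw [hz1, hz2, key, key, key, key]
  have h1 : (1:ℂ) + (2 * μ₁ + 1) = 2 * μ₁ + 2 := by ring
  have h2 : -(2 * (n₁₁:ℂ)) - 1 + (2 * μ₁ + 1) = 2 * μ₁ - 2 * n₁₁ := by ring
  have h3 : -(2 * (n₁₁:ℂ)) + 1 + (2 * μ₁ + 1) = 2 * μ₁ + 2 - 2 * n₁₁ := by ring
  have h4 : (1:ℂ) + (2 * μ₂ - 1) = 2 * μ₂ := by ring
  rw [h1, h2, h3, h4]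
  ring
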